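/- Let E ⊂ ℝ^{n+1} be compact, Σ_n(E) the set of positive Borel measures supported on E with μ(B_r(x̄)) ≤ r^n for all balls. Suppose S is a symmetric continuous nonnegative kernel on E × E and define F(μ) := μ(E)² / (μ(E) + ∫_E |Sμ|² dμ) (with 0/0 := 0), where Sμ(x̄) = ∫_E S(x̄,ȳ)dμ(ȳ). If μ₀ ∈ Σ_n(E) maximizes F over Σ_n(E) and F(μ₀) > 0, then ∫_E |Sμ₀|² dμ₀ ≤ μ₀(E). -/
import Mathlib


open MeasureTheory

/-- `Σ_n(E)`: positive Borel measures supported on `E` with `n`-growth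
`μ(B_r(x)) ≤ rⁿ`. -/
def AdmMeas (n : ℕ) (E : Set (EuclideanSpace ℝ (Fin (n + 1))))
    (μ : Measure (EuclideanSpace ℝ (Fin (n + 1)))) : Prop :=
  μ Eᶜ = 0 ∧ ∀ x r, 0 < r → μ (Metric.closedBall x r) ≤ ENNReal.ofReal (r ^ n)

/-- The variational functional `F(μ) := μ(E)² / (μ(E) + ∫ |Sμ|² dμ)`
(with `0/0 := 0`, which is Lean's convention for division by zero). -/
noncomputable def Fvar (n : ℕ) (E : Set (EuclideanSpace ℝ (Fin (n + 1))))
    (S : EuclideanSpace ℝ (Fin (n + 1)) → EuclideanSpace ℝ (Fin (n + 1)) → ℝ)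
    (μ : Measure (EuclideanSpace ℝ (Fin (n + 1)))) : ℝ :=
  (μ E).toReal ^ 2 / ((μ E).toReal + ∫ x, (∫ y, S x y ∂μ) ^ 2 ∂μ)

/-- If `μ₀ ∈ Σ_n(E)` maximizes `F` over `Σ_n(E)` and `F(μ₀) > 0`, then
`∫_E |Sμ₀|² dμ₀ ≤ μ₀(E)`. -/
theorem stmt8 (n : ℕ) (E : Set (EuclideanSpace ℝ (Fin (n + 1)))) (hE : IsCompact E)
    (S : EuclideanSpace ℝ (Fin (n + 1)) → EuclideanSpace ℝ (Fin (n + 1)) → ℝ)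
    (hScont : ContinuousOn (fun p : EuclideanSpace ℝ (Fin (n + 1)) ×
        EuclideanSpace ℝ (Fin (n + 1)) => S p.1 p.2) (E ×ˢ E))
    (hSsym : ∀ x y, S x y = S y x)
    (hSnn : ∀ x y, 0 ≤ S x y)
    (μ₀ : Measure (EuclideanSpace ℝ (Fin (n + 1))))
    (hμ₀ : AdmMeas n E μ₀)
    (hmax : ∀ μ, AdmMeas n E μ → Fvar n E S μ ≤ Fvar n E S μ₀)
    (hpos : 0 < Fvar n E S μ₀) :
    ∫ x, (∫ y, S x y ∂μ₀) ^ 2 ∂μ₀ ≤ (μ₀ E).toReal := by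

  set f : EuclideanSpace ℝ (Fin (n+1)) → ℝ := fun x => ∫ y, S x y ∂μ₀ with hf
  set a := (μ₀ E).toReal with ha
  set I := ∫ x, (f x)^2 ∂μ₀ with hI
  by_contra hcon
  push_neg at hcon
  have hI0 : 0 ≤ I := integral_nonneg fun x => sq_nonneg _
  have hF0 : Fvar n E S μ₀ = a^2/(a+I) := rfl
  have ha0 : 0 < a := by
    rcases lt_or_eq_of_le (ENNReal.toReal_nonneg : (0:ℝ) ≤ a) with h | h
    · exact h
    · have ha' : a = 0 := by rw [ha, ← h]
      rw [hF0, ha'] at hpos; simp at hpos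
  have hIpos : 0 < I := lt_trans ha0 hcon
  have hden : 0 < a + I := by linarith
  set c := Real.sqrt (a/I) with hc
  have hc0 : 0 < c := Real.sqrt_pos.mpr (by positivity)
  have hc2 : c^2 = a/I := Real.sq_sqrt (by positivity)
  have hc1 : c < 1 := by
    have hlt : a/I < 1 := (div_lt_one hIpos).mpr hcon
    nlinarith [hc2, hlt, hc0]
  have hcI : c^2 * I = a := by rw [hc2]; field_simp
  set μ₁ : Measure (EuclideanSpace ℝ (Fin (n+1))) := ENNReal.ofReal c • μ₀ with hμ₁def
  have hadm : AdmMeas n E μ₁ := by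
    constructor
    · rw [hμ₁def, Measure.smul_apply, hμ₀.1]; simp
    · intro x r hr
      rw [hμ₁def, Measure.smul_apply, smul_eq_mul]
      calc ENNReal.ofReal c * μ₀ (Metric.closedBall x r)
          ≤ 1 * μ₀ (Metric.closedBall x r) := by
            exact mul_le_mul_left (ENNReal.ofReal_le_one.mpr hc1.le) _
        _ = μ₀ (Metric.closedBall x r) := one_mul _
        _ ≤ ENNReal.ofReal (r ^ n) := hμ₀.2 x r hr
  have hE1 : (μ₁ E).toReal = c * a := by
    rw [hμ₁def, Measure.smul_apply, smul_eq_mul, ENNReal.toReal_mul,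
      ENNReal.toReal_ofReal hc0.le, ha]
  have h1 : ∀ x, (∫ y, S x y ∂μ₁) = c * f x := by
    intro x
    rw [hμ₁def, integral_smul_measure, smul_eq_mul, ENNReal.toReal_ofReal hc0.le]
  have hint : ∫ x, (∫ y, S x y ∂μ₁)^2 ∂μ₁ = c^3 * I := by
    calc ∫ x, (∫ y, S x y ∂μ₁)^2 ∂μ₁ = ∫ x, (c * f x)^2 ∂μ₁ := by simp only [h1]
      _ = c * ∫ x, (c * f x)^2 ∂μ₀ := by
          rw [hμ₁def, integral_smul_measure, smul_eq_mul, ENNReal.toReal_ofReal hc0.le]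
      _ = c * ∫ x, c^2 * (f x)^2 ∂μ₀ := by
          congr 1; apply integral_congr_ae; filter_upwards with x; ring
      _ = c^3 * I := by rw [integral_const_mul]; ring
  have hF1 : Fvar n E S μ₁ = (c*a)^2 / (c*a + c^3*I) := by
    rw [Fvar, hE1, hint]
  have hden1 : 0 < c*a + c^3*I := by positivity
  have h2c : 2*c < c^2 + 1 := by nlinarith [mul_pos (sub_pos.mpr hc1) (sub_pos.mpr hc1)]
  have hc3 : c^3 * I = c * a := by linear_combination c * hcI
  have hfinal : Fvar n E S μ₀ < Fvar n E S μ₁ := by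
    rw [hF0, hF1, div_lt_div_iff₀ hden hden1]
    have e1 : a^2 * (c*a + c^3*I) = 2 * c * a^3 := by linear_combination a^2 * hc3
    have e2 : (c*a)^2 * (a+I) = (c^2+1) * a^3 := by linear_combination a^2 * hcI
    rw [e1, e2]
    nlinarith [mul_lt_mul_of_pos_right h2c (pow_pos ha0 3)]
  linarith [hmax μ₁ hadm]
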